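/- Averaging formula for the misorientation angle: suppose at every point of a parametrized surface S the Frank's formula holds: θ·(r_u × a) = Σⱼ b⁽ʲ⁾·η_{ju} and θ·(r_v × a) = Σⱼ b⁽ʲ⁾·η_{jv}, with (r_u + r_v) × a ≠ 0. Then at each point θ·‖(r_u + r_v) × a‖² = Σⱼ (η_{ju} + η_{jv})·((r_u + r_v) × a)·b⁽ʲ⁾, and hence θ = (1/S_A)·∫_S Σⱼ (η_{ju} + η_{jv})·((r_u + r_v) × a)·b⁽ʲ⁾ / ‖(r_u + r_v) × a‖² dS, where S_A is the surface area of S (provided θ is constant over S). -/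

import Mathlib

open MeasureTheory

/-! Adding the two Frank equations gives `θ • c = ∑ⱼ (η_{ju} + η_{jv}) • b⁽ʲ⁾` for
`c = (r_u + r_v) × a`; dotting with `c` yields the pointwise identity. Since `c ≠ 0`, the
integrand equals `θ` on `D`, so its average over `D` is `θ`. -/

theorem smul_add_eq_sum_add_smul {R M ι : Type*} [Semiring R] [AddCommMonoid M] [Module R M]
    (s : Finset ι) (θ : R) (x y : M) (b : ι → M) (α β : ι → R)
    (hx : θ • x = ∑ j ∈ s, α j • b j) (hy : θ • y = ∑ j ∈ s, β j • b j) :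
    θ • (x + y) = ∑ j ∈ s, (α j + β j) • b j := by
  simp only [smul_add, hx, hy, add_smul, Finset.sum_add_distrib]

theorem mul_dotProduct_self_eq_sum {R n ι : Type*} [CommSemiring R] [Fintype n]
    (s : Finset ι) (θ : R) (c : n → R) (b : ι → n → R) (α : ι → R)
    (h : θ • c = ∑ j ∈ s, α j • b j) :
    θ * (c ⬝ᵥ c) = ∑ j ∈ s, α j * (c ⬝ᵥ b j) := by
  rw [← smul_eq_mul, ← dotProduct_smul, h, dotProduct_sum]
  simp only [dotProduct_smul, smul_eq_mul]

theorem eq_inv_measureReal_mul_setIntegral {X : Type*} [MeasurableSpace X] {μ : Measure X}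
    {s : Set X} {f : X → ℝ} {c : ℝ} (hs : MeasurableSet s) (hμ : μ.real s ≠ 0)
    (hf : Set.EqOn f (fun _ ↦ c) s) :
    c = (μ.real s)⁻¹ * ∫ x in s, f x ∂μ := by
  rw [setIntegral_congr_fun hs hf, setIntegral_const, smul_eq_mul, inv_mul_cancel_left₀ hμ]

theorem stmt_18_general (θ : ℝ) (a : Fin 3 → ℝ) (D : Set (ℝ × ℝ))
    (hD : MeasurableSet D)
    (S_A : ℝ) (hSA : S_A = (volume D).toReal) (hSApos : 0 < S_A)
    (ru rv : ℝ × ℝ → Fin 3 → ℝ) (J : ℕ)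
    (b : Fin J → Fin 3 → ℝ) (ηu ηv : Fin J → ℝ × ℝ → ℝ)
    (hFu : ∀ p ∈ D, θ • crossProduct (ru p) a = ∑ j, ηu j p • b j)
    (hFv : ∀ p ∈ D, θ • crossProduct (rv p) a = ∑ j, ηv j p • b j)
    (hnz : ∀ p ∈ D, crossProduct (ru p + rv p) a ≠ 0) :
    (∀ p ∈ D,
      θ * ∑ i, (crossProduct (ru p + rv p) a i) ^ 2 =
        ∑ j, (ηu j p + ηv j p) * ∑ i, crossProduct (ru p + rv p) a i * b j i) ∧
    θ = (1 / S_A) *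
      ∫ p in D,
        (∑ j, (ηu j p + ηv j p) * ∑ i, crossProduct (ru p + rv p) a i * b j i) /
          (∑ i, (crossProduct (ru p + rv p) a i) ^ 2) := by
  have hsq : ∀ c : Fin 3 → ℝ, ∑ i, c i ^ 2 = c ⬝ᵥ c := fun c ↦ by simp only [sq]; rfl
  have hpt : ∀ p ∈ D,
      θ * ∑ i, (crossProduct (ru p + rv p) a i) ^ 2 =
        ∑ j, (ηu j p + ηv j p) * ∑ i, crossProduct (ru p + rv p) a i * b j i := by
    intro p hp
    rw [hsq]
    refine mul_dotProduct_self_eq_sum _ _ _ _ _ ?_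
    rw [map_add, LinearMap.add_apply]
    exact smul_add_eq_sum_add_smul _ _ _ _ _ _ _ (hFu p hp) (hFv p hp)
  refine ⟨hpt, ?_⟩
  rw [hSA, one_div]
  refine eq_inv_measureReal_mul_setIntegral hD (by rw [measureReal_def, ← hSA]; positivity) ?_
  intro p hp
  have hne : ∑ i, (crossProduct (ru p + rv p) a i) ^ 2 ≠ 0 := by
    rw [hsq]; exact dotProduct_self_eq_zero.not.mpr (hnz p hp)
  simp only [← hpt p hp, mul_div_cancel_right₀ _ hne]

/-- Averaging formula for the misorientation angle: if Frank's formula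
`θ·(r_u × a) = Σⱼ η_{ju}·b⁽ʲ⁾`, `θ·(r_v × a) = Σⱼ η_{jv}·b⁽ʲ⁾` holds at every
point of the (orthogonal unit) parameter domain `D` of the grain boundary `S`,
with `(r_u + r_v) × a ≠ 0`, then pointwise
`θ·‖(r_u+r_v) × a‖² = Σⱼ (η_{ju}+η_{jv})·((r_u+r_v) × a)·b⁽ʲ⁾`, and hence
`θ = (1/S_A)·∫_S Σⱼ (η_{ju}+η_{jv})·((r_u+r_v) × a)·b⁽ʲ⁾ / ‖(r_u+r_v) × a‖² dS`,
where `S_A` is the surface area of `S`. -/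
theorem stmt_18 (θ : ℝ) (a : Fin 3 → ℝ) (D : Set (ℝ × ℝ))
    (hD : MeasurableSet D) (hDfin : volume D < ⊤)
    (S_A : ℝ) (hSA : S_A = (volume D).toReal) (hSApos : 0 < S_A)
    (ru rv : ℝ × ℝ → Fin 3 → ℝ) (J : ℕ)
    (b : Fin J → Fin 3 → ℝ) (ηu ηv : Fin J → ℝ × ℝ → ℝ)
    (hFu : ∀ p ∈ D, θ • crossProduct (ru p) a = ∑ j, ηu j p • b j)
    (hFv : ∀ p ∈ D, θ • crossProduct (rv p) a = ∑ j, ηv j p • b j)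
    (hnz : ∀ p ∈ D, crossProduct (ru p + rv p) a ≠ 0) :
    (∀ p ∈ D,
      θ * ∑ i, (crossProduct (ru p + rv p) a i) ^ 2 =
        ∑ j, (ηu j p + ηv j p) * ∑ i, crossProduct (ru p + rv p) a i * b j i) ∧
    θ = (1 / S_A) *
      ∫ p in D,
        (∑ j, (ηu j p + ηv j p) * ∑ i, crossProduct (ru p + rv p) a i * b j i) /
          (∑ i, (crossProduct (ru p + rv p) a i) ^ 2) :=
  stmt_18_general θ a D hD S_A hSA hSApos ru rv J b ηu ηv hFu hFv hnz
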